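/- arXiv:1801.03892 — 4 statements merged into one kernel-verified Lean document; each statement's English description precedes it below -/
import Mathlib

section
/- For integers T ≥ 2, k with 1 ≤ k < ⌈T/2⌉, and n = 2^T − 1, the minimal T_k satisfying ∑_{i=1}^{k} C(T_k, i) ≥ n is at least 2^{(T−1)/k} · k^{(k−1)/k} / e. -/
/-!
Since `2k < T ≤ m` (the sum is below `2^m`), the terms of `∑_{i=1}^k C(m,i)` increase with `i`, so `2^T - 1 ≤ k C(m,k)`.
Combined with the standard estimate `C(m,k) ≤ (e m / k)^k` (from `C(m,k) ≤ m^k / k!` and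
`k^k / k! ≤ e^k`) this gives `2^(T-1) k^(k-1) ≤ (e m)^k`; taking `k`-th roots yields the bound.
-/

open Finset Real

lemma two_mul_add_one_le_of_lt_ceil_half {T k : ℕ} (h : k < ⌈(T : ℚ) / 2⌉₊) : 2 * k + 1 ≤ T := by
  by_contra! hT
  refine h.not_ge (Nat.ceil_le.2 ?_)
  rw [div_le_iff₀ two_pos]
  exact_mod_cast (by omega : T ≤ k * 2)

lemma sum_choose_le_two_pow (m : ℕ) (s : Finset ℕ) : ∑ i ∈ s, m.choose i ≤ 2 ^ m := by
  rw [← Nat.sum_range_choose m]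
  refine sum_le_sum_of_ne_zero fun i _ hi => mem_range.2 ?_
  by_contra! him
  exact hi (Nat.choose_eq_zero_of_lt (by omega))

lemma sum_Icc_one_choose_lt_two_pow (m k : ℕ) : ∑ i ∈ Icc 1 k, m.choose i < 2 ^ m := by
  have h := sum_choose_le_two_pow m (insert 0 (Icc 1 k))
  rw [sum_insert (by simp), Nat.choose_zero_right] at h
  omega

lemma le_of_two_pow_sub_one_le_sum_Icc_choose {T k m : ℕ}
    (h : 2 ^ T - 1 ≤ ∑ i ∈ Icc 1 k, m.choose i) : T ≤ m := by
  have hlt := h.trans_lt (sum_Icc_one_choose_lt_two_pow m k)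
  have hpos := Nat.one_le_two_pow (n := T)
  exact (Nat.pow_le_pow_iff_right one_lt_two).1 (by omega)

lemma choose_le_choose_of_le_of_le_half {n a b : ℕ} (hab : a ≤ b) (hb : b ≤ n / 2) :
    n.choose a ≤ n.choose b := by
  induction b, hab using Nat.le_induction with
  | base => rfl
  | succ b _ ih => exact (ih (by omega)).trans (Nat.choose_le_succ_of_lt_half_left (by omega))

lemma sum_Icc_one_choose_le_mul_choose {m k : ℕ} (hkm : 2 * k ≤ m) :
    ∑ i ∈ Icc 1 k, m.choose i ≤ k * m.choose k := by
  have h := sum_le_card_nsmul (Icc 1 k) (m.choose ·) (m.choose k) fun i hi =>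
    choose_le_choose_of_le_of_le_half (mem_Icc.1 hi).2 (by omega)
  simpa using h

lemma pow_le_factorial_mul_exp (k : ℕ) : (k : ℝ) ^ k ≤ k.factorial * exp k := by
  have h := pow_div_factorial_le_exp (k : ℝ) k.cast_nonneg k
  rwa [div_le_iff₀' (by exact_mod_cast k.factorial_pos)] at h

lemma choose_mul_pow_le_exp_mul_pow (m k : ℕ) :
    (m.choose k : ℝ) * k ^ k ≤ (exp 1 * m) ^ k := by
  have hfact : (0 : ℝ) < k.factorial := by exact_mod_cast k.factorial_pos
  calc (m.choose k : ℝ) * k ^ k ≤ (m ^ k / k.factorial) * (k.factorial * exp k) := by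
        gcongr
        · exact Nat.choose_le_pow_div k m
        · exact pow_le_factorial_mul_exp k
    _ = (exp 1 * m) ^ k := by
        rw [mul_pow, ← exp_nat_mul, mul_one]
        field_simp

lemma two_pow_mul_pow_le_of_le_sum_Icc_choose {T k m : ℕ} (hT : 1 ≤ T) (hkm : 2 * k ≤ m)
    (h : 2 ^ T - 1 ≤ ∑ i ∈ Icc 1 k, m.choose i) :
    (2 : ℝ) ^ T * k ^ k ≤ 2 * k * (exp 1 * m) ^ k := by
  have h2T : 2 ≤ 2 ^ T := Nat.le_self_pow (by omega) 2
  have hnat : 2 ^ T ≤ 2 * (k * m.choose k) := by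
    have := h.trans (sum_Icc_one_choose_le_mul_choose hkm)
    omega
  have hreal : (2 : ℝ) ^ T ≤ 2 * k * m.choose k := by
    rw [mul_assoc]; exact_mod_cast hnat
  calc (2 : ℝ) ^ T * k ^ k ≤ 2 * k * m.choose k * k ^ k := by gcongr
    _ = 2 * k * (m.choose k * k ^ k) := by ring
    _ ≤ 2 * k * (exp 1 * m) ^ k := by gcongr; exact choose_mul_pow_le_exp_mul_pow m k

lemma rpow_div_mul_rpow_div {x y : ℝ} (hx : 0 ≤ x) (hy : 0 ≤ y) (a b c : ℝ) :
    x ^ (a / c) * y ^ (b / c) = (x ^ a * y ^ b) ^ c⁻¹ := by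
  rw [div_eq_mul_inv, div_eq_mul_inv, rpow_mul hx, rpow_mul hy,
    mul_rpow (rpow_nonneg hx a) (rpow_nonneg hy b)]

theorem stmt0_general (T k : ℕ) (hk1 : 1 ≤ k) (hk2 : k < ⌈(T : ℚ) / 2⌉₊)
    (m : ℕ) (hm : 2 ^ T - 1 ≤ ∑ i ∈ Finset.Icc 1 k, m.choose i) :
    (2 : ℝ) ^ (((T : ℝ) - 1) / k) * (k : ℝ) ^ (((k : ℝ) - 1) / k) / Real.exp 1 ≤ m := by
  have hTk := two_mul_add_one_le_of_lt_ceil_half hk2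
  have hTm := le_of_two_pow_sub_one_le_sum_Icc_choose hm
  have hk : (0 : ℝ) < k := by exact_mod_cast hk1
  have hbound : (2 : ℝ) ^ ((T : ℝ) - 1) * (k : ℝ) ^ ((k : ℝ) - 1) ≤ (exp 1 * m) ^ (k : ℝ) := by
    rw [rpow_sub_one two_ne_zero, rpow_sub_one hk.ne', rpow_natCast, rpow_natCast, rpow_natCast,
      div_mul_div_comm, div_le_iff₀ (by positivity)]
    linarith [two_pow_mul_pow_le_of_le_sum_Icc_choose (by omega) (by omega) hm]
  calc (2 : ℝ) ^ (((T : ℝ) - 1) / k) * (k : ℝ) ^ (((k : ℝ) - 1) / k) / exp 1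
      = (2 ^ ((T : ℝ) - 1) * (k : ℝ) ^ ((k : ℝ) - 1)) ^ (k : ℝ)⁻¹ / exp 1 := by
        rw [rpow_div_mul_rpow_div zero_le_two hk.le]
    _ ≤ exp 1 * m / exp 1 := by
        gcongr
        exact (rpow_inv_le_iff_of_pos (by positivity) (by positivity) hk).2 hbound
    _ = m := mul_div_cancel_left₀ _ (exp_pos 1).ne'

/-- For integers `T ≥ 2`, `1 ≤ k < ⌈T/2⌉` and `n = 2^T - 1`, any `m` satisfying
`∑_{i=1}^k C(m,i) ≥ n` obeys `m ≥ 2^((T-1)/k) · k^((k-1)/k) / e`. -/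
theorem stmt0 (T k : ℕ) (hT : 2 ≤ T) (hk1 : 1 ≤ k) (hk2 : k < ⌈(T : ℚ) / 2⌉₊)
    (m : ℕ) (hm : 2 ^ T - 1 ≤ ∑ i ∈ Finset.Icc 1 k, m.choose i) :
    (2 : ℝ) ^ (((T : ℝ) - 1) / k) * (k : ℝ) ^ (((k : ℝ) - 1) / k) / Real.exp 1 ≤ m :=
  stmt0_general T k hk1 hk2 m hm
end

section
/- Let G be a set of T+1 vectors in F_2^T whose span has dimension T. Then there exist T vectors a_1, …, a_T in F_2^T such that every vector of G is a sum of at most 2 of the a_i. -/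
/-!
Choose a basis `B ⊆ G`; the remaining vector `w` is then `∑ S` for some `S ⊆ B`, since over `𝔽₂`
every coefficient is `0` or `1`. List `B` with the elements of `S` first and let the `a_i` be the
nonempty prefix sums of that list. In characteristic `2` each listed vector is the sum of two
consecutive prefix sums, and `w` is itself a prefix sum.
-/

open Finset Module Submodule

section PrefixSum

variable {M : Type*} [AddCommMonoid M]

def prefixSum (l : List M) (n : ℕ) : Fin n → M := fun i => (l.take (i + 1)).sum

theorem exists_sum_take_eq_sum_prefixSum (l : List M) {n k : ℕ} (hk : k ≤ n) :
    ∃ S : Finset (Fin n), S.card ≤ 1 ∧ (∀ i ∈ S, (i : ℕ) + 1 = k) ∧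
      (l.take k).sum = ∑ i ∈ S, prefixSum l n i := by
  cases k with
  | zero => exact ⟨∅, by simp, by simp, by simp⟩
  | succ k => exact ⟨{⟨k, hk⟩}, by simp, by simp, by simp [prefixSum]⟩

theorem exists_sum_take_add_sum_take_eq_sum_prefixSum (l : List M) {n j k : ℕ}
    (hj : j ≤ n) (hk : k ≤ n) (hjk : j ≠ k) :
    ∃ S : Finset (Fin n), S.card ≤ 2 ∧
      (l.take j).sum + (l.take k).sum = ∑ i ∈ S, prefixSum l n i := by
  classical
  obtain ⟨S, hS, hSj, hSsum⟩ := exists_sum_take_eq_sum_prefixSum l hj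
  obtain ⟨R, hR, hRk, hRsum⟩ := exists_sum_take_eq_sum_prefixSum l hk
  have hdisj : Disjoint S R :=
    disjoint_left.2 fun i hiS hiR => hjk ((hSj i hiS).symm.trans (hRk i hiR))
  exact ⟨S ∪ R, (card_union_le S R).trans (by omega), by rw [sum_union hdisj, hSsum, hRsum]⟩

end PrefixSum

section CharTwo

variable {M : Type*} [AddCommGroup M] [Module (ZMod 2) M]

theorem exists_getElem_eq_sum_prefixSum (l : List M) {n : ℕ} (hn : l.length ≤ n) {i : ℕ}
    (hi : i < l.length) : ∃ S : Finset (Fin n), S.card ≤ 2 ∧ l[i] = ∑ j ∈ S, prefixSum l n j := by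
  have h : l[i] = (l.take i).sum + (l.take (i + 1)).sum := by
    rw [List.sum_take_succ l i hi, ← add_assoc, ZModModule.add_self, zero_add]
  rw [h]
  exact exists_sum_take_add_sum_take_eq_sum_prefixSum l (by omega) (by omega) (by omega)

theorem exists_cover_insert_sum_of_subset [DecidableEq M] {S B : Finset M} (hSB : S ⊆ B) {n : ℕ}
    (hn : B.card ≤ n) : ∃ a : Fin n → M,
      ∀ v ∈ insert (∑ x ∈ S, x) B, ∃ s : Finset (Fin n), s.card ≤ 2 ∧ v = ∑ i ∈ s, a i := by
  set l := S.toList ++ (B \ S).toList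
  have hlen : l.length = B.card := by
    have := card_le_card hSB
    simp only [l, List.length_append, length_toList, card_sdiff_of_subset hSB]
    omega
  refine ⟨prefixSum l n, fun v hv => ?_⟩
  rcases mem_insert.1 hv with rfl | hvB
  · obtain ⟨s, hs, -, hsum⟩ :=
      exists_sum_take_eq_sum_prefixSum l ((card_le_card hSB).trans hn)
    refine ⟨s, by omega, ?_⟩
    rw [← hsum, List.take_left' (length_toList S), sum_toList]
  · have hvl : v ∈ l := by
      by_cases hvS : v ∈ S <;> simp [l, hvS, hvB]
    obtain ⟨i, hi, rfl⟩ := List.mem_iff_getElem.1 hvl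
    exact exists_getElem_eq_sum_prefixSum l (hlen ▸ hn) hi

theorem exists_subset_sum_eq_of_mem_span {B : Finset M} {w : M}
    (hw : w ∈ span (ZMod 2) (B : Set M)) : ∃ S ⊆ B, ∑ x ∈ S, x = w := by
  classical
  obtain ⟨f, -, rfl⟩ := mem_span_finset.1 hw
  refine ⟨B.filter (f · = 1), filter_subset _ _, ?_⟩
  rw [sum_filter]
  refine sum_congr rfl fun x _ => ?_
  rcases (by decide : ∀ c : ZMod 2, c = 0 ∨ c = 1) (f x) with h | h <;> simp [h]

end CharTwo

theorem exists_finset_subset_card_eq_finrank_span_eq (K : Type*) {V : Type*} [DivisionRing K]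
    [AddCommGroup V] [Module K V] (G : Finset V) :
    ∃ B ⊆ G, B.card = finrank K (span K (G : Set V)) ∧ span K (B : Set V) = span K G := by
  obtain ⟨b, hbG, hspan, hli⟩ := exists_linearIndependent K (G : Set V)
  lift b to Finset V using G.finite_toSet.subset hbG
  refine ⟨b, by exact_mod_cast hbG, ?_, hspan⟩
  rw [← hspan, finrank_span_finset_eq_card hli]

theorem exists_cover_of_card_eq_finrank_span_add_one {V : Type*} [AddCommGroup V]
    [Module (ZMod 2) V] {G : Finset V} {n : ℕ} (hcard : G.card = n + 1)
    (hrank : finrank (ZMod 2) (span (ZMod 2) (G : Set V)) = n) :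
    ∃ a : Fin n → V, ∀ v ∈ G, ∃ s : Finset (Fin n), s.card ≤ 2 ∧ v = ∑ i ∈ s, a i := by
  classical
  obtain ⟨B, hBG, hBcard, hBspan⟩ := exists_finset_subset_card_eq_finrank_span_eq (ZMod 2) G
  obtain ⟨w, -, rfl⟩ := exists_eq_insert_iff.2 ⟨hBG, by omega⟩
  have hw : w ∈ span (ZMod 2) (B : Set V) := hBspan ▸ subset_span (mem_insert_self w B)
  obtain ⟨S, hSB, rfl⟩ := exists_subset_sum_eq_of_mem_span hw
  exact exists_cover_insert_sum_of_subset hSB (by omega)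

theorem stmt8_general (T : ℕ) (G : Finset (Fin T → ZMod 2))
    (hcard : G.card = T + 1)
    (hrank : Module.finrank (ZMod 2) (Submodule.span (ZMod 2) (G : Set (Fin T → ZMod 2))) = T) :
    ∃ a : Fin T → Fin T → ZMod 2,
      ∀ v ∈ G, ∃ S : Finset (Fin T), S.card ≤ 2 ∧ v = ∑ i ∈ S, a i :=
  exists_cover_of_card_eq_finrank_span_add_one hcard hrank

/-- Circuit lemma: a set of `T+1` vectors of `F₂^T` whose span has dimension `T` can be
covered by `T` vectors so that every member is a sum of at most `2` of them. -/
theorem stmt8 (T : ℕ) (hT : 1 ≤ T) (G : Finset (Fin T → ZMod 2))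
    (hcard : G.card = T + 1)
    (hrank : Module.finrank (ZMod 2) (Submodule.span (ZMod 2) (G : Set (Fin T → ZMod 2))) = T) :
    ∃ a : Fin T → Fin T → ZMod 2,
      ∀ v ∈ G, ∃ S : Finset (Fin T), S.card ≤ 2 ∧ v = ∑ i ∈ S, a i :=
  stmt8_general T G hcard hrank
end

section
/- For integers T ≥ 2 and 1 ≤ k < T, if n = 2^T − 1 then ∑_{i=1}^{k} C(T_k, i) ≥ 2^T − 1 implies T_k ≥ T; moreover if k ≥ ⌈T/2⌉ then T_k = T + 1 satisfies ∑_{i=1}^{k} C(T+1, i) ≥ 2^T − 1. -/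
open Finset

lemma insert_zero_Icc (k : ℕ) : insert 0 (Finset.Icc 1 k) = Finset.range (k+1) := by
  ext x; simp [Nat.lt_succ_iff]; omega

lemma sum_icc_eq (k : ℕ) (f : ℕ → ℕ) :
    ∑ i ∈ Finset.range (k+1), f i = f 0 + ∑ i ∈ Finset.Icc 1 k, f i := by
  rw [← insert_zero_Icc, Finset.sum_insert (by simp)]

lemma partial_sum_le (m k : ℕ) : ∑ i ∈ Finset.range (k+1), m.choose i ≤ 2 ^ m := by
  calc ∑ i ∈ Finset.range (k+1), m.choose i
      ≤ ∑ i ∈ Finset.range (m+k+1), m.choose i :=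
        Finset.sum_le_sum_of_subset (by intro x; simp; omega)
    _ = ∑ i ∈ Finset.range (m+1), m.choose i := by
        refine (Finset.sum_subset (by intro x; simp; omega) ?_).symm
        intro x _ hx
        simp only [Finset.mem_range] at hx
        exact Nat.choose_eq_zero_of_lt (by omega)
    _ = 2 ^ m := Nat.sum_range_choose m

lemma half_sum_ge (T k : ℕ) (hk : T ≤ 2 * k) (hkT : k ≤ T) :
    2 ^ (T+1) ≤ 2 * ∑ i ∈ Finset.range (k+1), (T+1).choose i := by
  have hsplit : ∑ i ∈ Finset.Ico 0 (k+1), (T+1).choose i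
      + ∑ i ∈ Finset.Ico (k+1) (T+2), (T+1).choose i
      = ∑ i ∈ Finset.Ico 0 (T+2), (T+1).choose i :=
    Finset.sum_Ico_consecutive _ (by omega) (by omega)
  have htot : ∑ i ∈ Finset.Ico 0 (T+2), (T+1).choose i = 2 ^ (T+1) := by
    rw [← Finset.range_eq_Ico]
    exact Nat.sum_range_choose (T+1)
  have hrefl : ∑ i ∈ Finset.Ico (k+1) (T+2), (T+1).choose i
      = ∑ i ∈ Finset.Ico 0 (T+1-k), (T+1).choose i := by
    refine Finset.sum_nbij' (fun i => T+1-i) (fun j => T+1-j) ?_ ?_ ?_ ?_ ?_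
    · intro a ha; simp at ha ⊢; omega
    · intro a ha; simp at ha ⊢; omega
    · intro a ha; simp at ha; show T+1-(T+1-a) = a; omega
    · intro a ha; simp at ha; show T+1-(T+1-a) = a; omega
    · intro a ha; simp at ha
      exact (Nat.choose_symm (by omega)).symm
  have hle : ∑ i ∈ Finset.Ico 0 (T+1-k), (T+1).choose i
      ≤ ∑ i ∈ Finset.Ico 0 (k+1), (T+1).choose i :=
    Finset.sum_le_sum_of_subset (by intro x; simp; omega)
  rw [Finset.range_eq_Ico]
  omega

/-- For `T ≥ 2`, `1 ≤ k < T` and `n = 2^T - 1`: any `m` with `∑_{i=1}^k C(m,i) ≥ 2^T - 1`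
satisfies `m ≥ T`; moreover, if `k ≥ ⌈T/2⌉` then `T_k = T+1` satisfies the counting
condition `∑_{i=1}^k C(T+1,i) ≥ 2^T - 1`. -/
theorem stmt10 (T k : ℕ) (hT : 2 ≤ T) (hk1 : 1 ≤ k) (hk2 : k < T) :
    (∀ m : ℕ, 2 ^ T - 1 ≤ ∑ i ∈ Finset.Icc 1 k, m.choose i → T ≤ m) ∧
    (⌈(T : ℚ) / 2⌉₊ ≤ k → 2 ^ T - 1 ≤ ∑ i ∈ Finset.Icc 1 k, (T + 1).choose i) := by
  constructor
  · intro m hm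
    by_contra hlt
    push_neg at hlt
    have h1 : ∑ i ∈ Finset.Icc 1 k, m.choose i ≤ 2 ^ m - 1 := by
      have := sum_icc_eq k (m.choose)
      have := partial_sum_le m k
      simp [Nat.choose_zero_right] at *
      omega
    have h2 : 2 ^ m < 2 ^ T := Nat.pow_lt_pow_right (by norm_num) hlt
    have h3 : (1:ℕ) ≤ 2 ^ m := Nat.one_le_two_pow
    omega
  · intro hceil
    have hk : T ≤ 2 * k := by
      have h := Nat.le_ceil ((T:ℚ)/2)
      have : (T:ℚ) ≤ 2 * (⌈(T:ℚ)/2⌉₊ : ℚ) := by linarith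
      have : (T:ℚ) ≤ 2 * (k:ℚ) := by
        have : ((⌈(T:ℚ)/2⌉₊ : ℕ) : ℚ) ≤ (k:ℚ) := by exact_mod_cast hceil
        linarith
      exact_mod_cast this
    have h1 := half_sum_ge T k hk (le_of_lt hk2)
    have h2 := sum_icc_eq k ((T+1).choose)
    simp [Nat.choose_zero_right] at h2
    have h3 : 2 ^ (T+1) = 2 * 2 ^ T := by ring
    omega
end

section
/- For any n vectors in F_2^T, one can select at most T·(⌊n/(T+1)⌋ + 1) vectors such that each of the n vectors is a sum of at most 2 selected vectors. -/
section aux13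

variable {T : ℕ}

private lemma char2_13 (x : Fin T → ZMod 2) : x + x = 0 := by
  funext t
  have h : ∀ a : ZMod 2, a + a = 0 := by decide
  exact h (x t)

/-- representing a sum of two elements of `insert 0 A` as a sum over a subset of `A`. -/
private lemma pair_rep_13 (A : Finset (Fin T → ZMod 2)) (a b : Fin T → ZMod 2)
    (ha : a ∈ insert 0 A) (hb : b ∈ insert 0 A) :
    ∃ S ⊆ A, S.card ≤ 2 ∧ a + b = ∑ x ∈ S, x := by
  rcases Finset.mem_insert.mp ha with ha0 | haA
  · rcases Finset.mem_insert.mp hb with hb0 | hbA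
    · exact ⟨∅, Finset.empty_subset A, by simp, by simp [ha0, hb0]⟩
    · exact ⟨{b}, Finset.singleton_subset_iff.mpr hbA, by simp, by simp [ha0]⟩
  · rcases Finset.mem_insert.mp hb with hb0 | hbA
    · exact ⟨{a}, Finset.singleton_subset_iff.mpr haA, by simp, by simp [hb0]⟩
    · by_cases hab : a = b
      · exact ⟨∅, Finset.empty_subset A, by simp, by simp [hab, char2_13]⟩
      · refine ⟨{a, b}, ?_, ?_, ?_⟩
        · intro x hx
          rcases Finset.mem_insert.mp hx with h | h
          · exact h ▸ haA
          · exact (Finset.mem_singleton.mp h) ▸ hbA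
        · exact Finset.card_insert_le _ _ |>.trans (by simp)
        · rw [Finset.sum_pair hab]

/-- key lemma: any `T+1` vectors in `F₂^T` can all be written as sums of at most `2`
elements of a set of size at most `T`. -/
private lemma key_13 (v : Fin (T + 1) → Fin T → ZMod 2) :
    ∃ A : Finset (Fin T → ZMod 2), A.card ≤ T ∧
      ∀ i : Fin (T + 1), ∃ S ⊆ A, S.card ≤ 2 ∧ v i = ∑ x ∈ S, x := by
  -- classical
  -- linear dependence
  have hdep : ¬ LinearIndependent (ZMod 2) v := by
    intro h
    have := h.fintype_card_le_finrank
    rw [Module.finrank_fintype_fun_eq_card] at this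
    simp at this
  obtain ⟨c, hsum, i0, hi0⟩ := Fintype.not_linearIndependent_iff.mp hdep
  set S0 : Finset (Fin (T + 1)) := Finset.univ.filter (fun i => c i ≠ 0) with hS0def
  have hS0ne : S0.Nonempty := ⟨i0, by simp [hS0def, hi0]⟩
  have h01 : ∀ a : ZMod 2, a = 0 ∨ a = 1 := by decide
  have h0 : ∑ j ∈ S0, v j = 0 := by
    rw [← hsum, hS0def, Finset.sum_filter]
    refine Finset.sum_congr rfl fun i _ => ?_
    rcases h01 (c i) with h | h <;> simp [h]
  set P : Fin (T + 1) → (Fin T → ZMod 2) := fun i => ∑ j ∈ S0.filter (· ≤ i), v j with hP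
  set A0 : Finset (Fin T → ZMod 2) :=
    S0.image P ∪ (Finset.univ \ S0).image v with hA0
  set A : Finset (Fin T → ZMod 2) := A0.erase 0 with hA
  have hmax : P (S0.max' hS0ne) = 0 := by
    have hfe : S0.filter (· ≤ S0.max' hS0ne) = S0 := by
      apply Finset.filter_true_of_mem
      intro j hj
      exact Finset.le_max' S0 j hj
    show ∑ j ∈ S0.filter (· ≤ S0.max' hS0ne), v j = 0
    rw [hfe]; exact h0
  have h0A0 : (0 : Fin T → ZMod 2) ∈ A0 := by
    rw [hA0]
    exact Finset.mem_union_left _ (Finset.mem_image.mpr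
      ⟨S0.max' hS0ne, S0.max'_mem hS0ne, hmax⟩)
  have hsub : ∀ x ∈ A0, x ∈ insert 0 A := by
    intro x hx
    by_cases hx0 : x = 0
    · subst hx0; exact Finset.mem_insert_self 0 A
    · exact Finset.mem_insert_of_mem (Finset.mem_erase.mpr ⟨hx0, hx⟩)
  have hcard : A.card ≤ T := by
    have h1 : A0.card ≤ T + 1 := by
      calc A0.card ≤ (S0.image P).card + ((Finset.univ \ S0).image v).card :=
            Finset.card_union_le _ _
        _ ≤ S0.card + (Finset.univ \ S0).card := by
            gcongr <;> exact Finset.card_image_le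
        _ = (Finset.univ : Finset (Fin (T + 1))).card := by
            rw [Finset.card_sdiff_of_subset (Finset.subset_univ S0)]
            have := Finset.card_le_card (Finset.subset_univ S0)
            omega
        _ = T + 1 := by simp
    have h2 : A.card = A0.card - 1 := Finset.card_erase_of_mem h0A0
    omega
  refine ⟨A, hcard, fun i => ?_⟩
  by_cases hi : i ∈ S0
  · -- v i = P i + Q where Q is the prefix sum strictly below i
    set Q : Fin T → ZMod 2 := ∑ j ∈ S0.filter (· < i), v j with hQ
    have hfilter : S0.filter (· ≤ i) = insert i (S0.filter (· < i)) := by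
      ext j
      simp only [Finset.mem_filter, Finset.mem_insert]
      constructor
      · rintro ⟨hj, hji⟩
        rcases lt_or_eq_of_le hji with h | h
        · exact Or.inr ⟨hj, h⟩
        · exact Or.inl h
      · rintro (h | ⟨hj, hji⟩)
        · exact ⟨h ▸ hi, h ▸ le_refl i⟩
        · exact ⟨hj, le_of_lt hji⟩
    have hPQ : P i = v i + Q := by
      show ∑ j ∈ S0.filter (· ≤ i), v j = v i + ∑ j ∈ S0.filter (· < i), v j
      rw [hfilter, Finset.sum_insert (by simp)]
    have hvi : v i = P i + Q := by
      rw [hPQ, add_assoc, char2_13 Q, add_zero]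
    have hPmem : P i ∈ insert 0 A :=
      hsub _ (Finset.mem_union_left _ (Finset.mem_image.mpr ⟨i, hi, rfl⟩))
    have hQmem : Q ∈ insert 0 A := by
      by_cases hne : (S0.filter (· < i)).Nonempty
      · obtain ⟨m, hmS0, hmi, hmax'⟩ :
            ∃ m, m ∈ S0 ∧ m < i ∧ ∀ j ∈ S0.filter (· < i), j ≤ m := by
          have h1 := (S0.filter (· < i)).max'_mem hne
          rw [Finset.mem_filter] at h1
          exact ⟨(S0.filter (· < i)).max' hne, h1.1, h1.2,
            fun j hj => Finset.le_max' _ j hj⟩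
        have heq : S0.filter (· < i) = S0.filter (· ≤ m) := by
          ext j
          simp only [Finset.mem_filter]
          constructor
          · rintro ⟨hj, hji⟩
            exact ⟨hj, hmax' j (Finset.mem_filter.mpr ⟨hj, hji⟩)⟩
          · rintro ⟨hj, hjm⟩
            exact ⟨hj, lt_of_le_of_lt hjm hmi⟩
        have hQP : Q = P m := by
          show (∑ j ∈ S0.filter (· < i), v j) = ∑ j ∈ S0.filter (· ≤ m), v j
          rw [heq]
        rw [hQP]
        exact hsub _ (Finset.mem_union_left _ (Finset.mem_image.mpr ⟨m, hmS0, rfl⟩))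
      · rw [Finset.not_nonempty_iff_eq_empty] at hne
        rw [hQ, hne, Finset.sum_empty]
        exact Finset.mem_insert_self 0 A
    obtain ⟨S, hSA, hScard, hSsum⟩ := pair_rep_13 A (P i) Q hPmem hQmem
    exact ⟨S, hSA, hScard, hvi.trans hSsum⟩
  · have hvmem : v i ∈ insert 0 A :=
      hsub _ (Finset.mem_union_right _ (Finset.mem_image.mpr
        ⟨i, Finset.mem_sdiff.mpr ⟨Finset.mem_univ i, hi⟩, rfl⟩))
    obtain ⟨S, hSA, hScard, hSsum⟩ := pair_rep_13 A (v i) 0 hvmem (Finset.mem_insert_self 0 A)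
    exact ⟨S, hSA, hScard, by rw [← add_zero (v i)]; exact hSsum⟩

private lemma aux_13 (T : ℕ) : ∀ n : ℕ, ∀ g : Fin n → Fin T → ZMod 2,
    ∃ A : Finset (Fin T → ZMod 2), A.card ≤ T * (n / (T + 1)) + n % (T + 1) ∧
      ∀ j : Fin n, ∃ S ⊆ A, S.card ≤ 2 ∧ g j = ∑ x ∈ S, x := by
  intro n
  induction n using Nat.strong_induction_on with
  | _ n ih =>
  intro g
  rcases lt_or_ge n (T + 1) with h | h
  · refine ⟨Finset.univ.image g, ?_, fun j => ?_⟩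
    · have h1 : (Finset.univ.image g).card ≤ n := by
        calc (Finset.univ.image g).card ≤ (Finset.univ : Finset (Fin n)).card :=
              Finset.card_image_le
          _ = n := by simp
      have h2 : n % (T + 1) = n := Nat.mod_eq_of_lt h
      omega
    · exact ⟨{g j}, Finset.singleton_subset_iff.mpr
        (Finset.mem_image.mpr ⟨j, Finset.mem_univ j, rfl⟩), by simp, by simp⟩
  · set m := n - (T + 1) with hm
    have hmn : m + (T + 1) = n := Nat.sub_add_cancel h
    obtain ⟨A1, hA1c, hA1⟩ := ih m (by omega) (fun j : Fin m => g ⟨(j : ℕ), by omega⟩)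
    obtain ⟨A2, hA2c, hA2⟩ := key_13 (fun i : Fin (T + 1) => g ⟨m + (i : ℕ), by omega⟩)
    have hdiv : n / (T + 1) = m / (T + 1) + 1 := by
      rw [← hmn, Nat.add_div_right _ (by omega)]
    have hmod : n % (T + 1) = m % (T + 1) := by
      rw [← hmn, Nat.add_mod_right]
    refine ⟨A1 ∪ A2, ?_, fun j => ?_⟩
    · calc (A1 ∪ A2).card ≤ A1.card + A2.card := Finset.card_union_le _ _
        _ ≤ (T * (m / (T + 1)) + m % (T + 1)) + T := by omega
        _ = T * (m / (T + 1) + 1) + m % (T + 1) := by ring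
        _ = T * (n / (T + 1)) + n % (T + 1) := by rw [hdiv, hmod]
    · by_cases hj : (j : ℕ) < m
      · obtain ⟨S, hSA, hScard, hSsum⟩ := hA1 ⟨(j : ℕ), hj⟩
        refine ⟨S, hSA.trans Finset.subset_union_left, hScard, ?_⟩
        have : g ⟨(j : ℕ), by omega⟩ = g j := rfl
        rw [← this]; exact hSsum
      · have hji : (j : ℕ) - m < T + 1 := by have := j.isLt; omega
        obtain ⟨S, hSA, hScard, hSsum⟩ := hA2 ⟨(j : ℕ) - m, hji⟩
        refine ⟨S, hSA.trans Finset.subset_union_right, hScard, ?_⟩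
        have hj' : (⟨m + ((j : ℕ) - m), by omega⟩ : Fin n) = j := by
          apply Fin.ext
          show m + ((j : ℕ) - m) = (j : ℕ)
          omega
        rw [← hj']
        exact hSsum

end aux13

/-- Worst case for SCR with `k = 2`: for any `n` vectors in `F₂^T` one can select at most
`T·(⌊n/(T+1)⌋ + 1)` vectors such that each given vector is a sum of at most `2` selected
vectors. -/
theorem stmt13 (n T : ℕ) (hT : 1 ≤ T) (g : Fin n → Fin T → ZMod 2) :
    ∃ A : Finset (Fin T → ZMod 2), A.card ≤ T * (n / (T + 1) + 1) ∧
      ∀ j : Fin n, ∃ S ⊆ A, S.card ≤ 2 ∧ g j = ∑ x ∈ S, x := by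
  obtain ⟨A, hAc, hA⟩ := aux_13 T n g
  refine ⟨A, ?_, hA⟩
  have hmod : n % (T + 1) ≤ T := by
    have := Nat.mod_lt n (show 0 < T + 1 by omega); omega
  calc A.card ≤ T * (n / (T + 1)) + n % (T + 1) := hAc
    _ ≤ T * (n / (T + 1)) + T := by omega
    _ = T * (n / (T + 1) + 1) := by ring
end
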